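/- arXiv:1512.03956 — 6 statements merged into one kernel-verified Lean document; each statement's English description precedes it below -/
import Mathlib

section
/- Suppose smooth functions F, G, H : ℝ → ℂ and α, w : ℝ → ℂ satisfy, for a fixed nonzero z ∈ ℂ, the equations z F' = -2(α+z)F + 2G, z G' = -(α²+w)F - H, and z H' = 2(α+z)H + 2(α²+w)G. Then the quantity G(x)² + F(x)H(x) is constant in x. -/
/-! The derivative of `G² + F H` is `2 G G' + F' H + F H'`. After multiplication by `z`, the
three equations turn it into an expression in `F, G, H` in which every term cancels. -/

lemma two_mul_mul_add_mul_add_mul_eq_zero {z p q F G H F' G' H' : ℂ} (hz : z ≠ 0)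
    (e1 : z * F' = -2 * p * F + 2 * G) (e2 : z * G' = -q * F - H)
    (e3 : z * H' = 2 * p * H + 2 * q * G) :
    2 * G * G' + (F' * H + F * H') = 0 := by
  refine (mul_eq_zero.mp ?_).resolve_left hz
  linear_combination 2 * G * e2 + H * e1 + F * e3

theorem stmt2 (z : ℂ) (hz : z ≠ 0) (F G H F' G' H' α w : ℝ → ℂ)
    (hF : ∀ x, HasDerivAt F (F' x) x) (hG : ∀ x, HasDerivAt G (G' x) x)
    (hH : ∀ x, HasDerivAt H (H' x) x)
    (e1 : ∀ x, z * F' x = -2 * (α x + z) * F x + 2 * G x)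
    (e2 : ∀ x, z * G' x = -((α x)^2 + w x) * F x - H x)
    (e3 : ∀ x, z * H' x = 2 * (α x + z) * H x + 2 * ((α x)^2 + w x) * G x) :
    ∀ x y : ℝ, (G x)^2 + F x * H x = (G y)^2 + F y * H y := by
  have hderiv : ∀ x, HasDerivAt (fun t => G t ^ 2 + F t * H t) 0 x := fun x => by
    refine (((hG x).pow 2).add ((hF x).mul (hH x))).congr_deriv ?_
    rw [← two_mul_mul_add_mul_add_mul_eq_zero hz (e1 x) (e2 x) (e3 x)]
    norm_num
  exact is_const_of_deriv_eq_zero (fun t => (hderiv t).differentiableAt) fun t => (hderiv t).deriv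
end

section
/- Under the hypotheses that z F' = -2(α+z)F + 2G and z G' = -(α²+w)F - H for a fixed nonzero z, the third zero-curvature equation z H' = 2(α+z)H + 2(α²+w)G is equivalent to the identity H' + 2(α+z)G' - (α²+w)F' = 0. -/
/-! Eliminating `F` and `G` with the first two equations shows that `z H' - 2(α + z)H - 2(α² + w)G`
equals `z (H' + 2(α + z)G' - (α² + w)F')`, and `z` is not a zero divisor. -/

section ZeroCurvature

variable {R : Type*} [CommRing R] {z a b F G H F' G' H' : R}

theorem third_zero_curvature_defect_eq
    (e1 : z * F' = -2 * (a + z) * F + 2 * G) (e2 : z * G' = -b * F - H) :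
    z * H' - (2 * (a + z) * H + 2 * b * G) = z * (H' + 2 * (a + z) * G' - b * F') := by
  linear_combination b * e1 - 2 * (a + z) * e2

theorem third_zero_curvature_iff [NoZeroDivisors R] (hz : z ≠ 0)
    (e1 : z * F' = -2 * (a + z) * F + 2 * G) (e2 : z * G' = -b * F - H) :
    z * H' = 2 * (a + z) * H + 2 * b * G ↔ H' + 2 * (a + z) * G' - b * F' = 0 := by
  rw [← sub_eq_zero, third_zero_curvature_defect_eq e1 e2, mul_eq_zero, or_iff_right hz]

end ZeroCurvature

theorem stmt3_general (z : ℂ) (hz : z ≠ 0) (F G H F' G' H' α w : ℝ → ℂ)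
    (e1 : ∀ x, z * F' x = -2 * (α x + z) * F x + 2 * G x)
    (e2 : ∀ x, z * G' x = -((α x)^2 + w x) * F x - H x) :
    ∀ x, (z * H' x = 2 * (α x + z) * H x + 2 * ((α x)^2 + w x) * G x) ↔
      (H' x + 2 * (α x + z) * G' x - ((α x)^2 + w x) * F' x = 0) :=
  fun x => third_zero_curvature_iff hz (e1 x) (e2 x)

theorem stmt3 (z : ℂ) (hz : z ≠ 0) (F G H F' G' H' α w : ℝ → ℂ)
    (hF : ∀ x, HasDerivAt F (F' x) x) (hG : ∀ x, HasDerivAt G (G' x) x)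
    (hH : ∀ x, HasDerivAt H (H' x) x)
    (e1 : ∀ x, z * F' x = -2 * (α x + z) * F x + 2 * G x)
    (e2 : ∀ x, z * G' x = -((α x)^2 + w x) * F x - H x) :
    ∀ x, (z * H' x = 2 * (α x + z) * H x + 2 * ((α x)^2 + w x) * G x) ↔
      (H' x + 2 * (α x + z) * G' x - ((α x)^2 + w x) * F' x = 0) :=
  stmt3_general z hz F G H F' G' H' α w e1 e2
end

section
/- Suppose the Dubrovin equations μ_j'(x) = 2 y(μ̂_j(x))/μ_j(x) · ∏_{ℓ≠j}(μ_j(x) - μ_ℓ(x))^{-1} hold on an interval, where y(μ̂_j)² = R_{2n+2}(μ_j) and R_{2n+2}(z) = ∏_{m=0}^{2n+1}(z - E_m). Define F_n(z,x) = ∏_{j=1}^n(z - μ_j(x)) and G_{n+1}(z,x) = (α+z)F_n + (z/2)F_{n,x} with α arbitrary. Then R_{2n+2}(μ_j(x)) - G_{n+1}(μ_j(x),x)² = 0 for all j and x, and consequently the polynomial z ↦ R_{2n+2}(z) - G_{n+1}(z,x)² is divisible by F_n(z,x). -/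
/-!
At a zero `μ_j` of `F_n` the first term of `G_{n+1}` vanishes, and of the sum `F_{n,x}` only the
summand `-μ_j' ∏_{ℓ ≠ j} (z - μ_ℓ)` survives. The Dubrovin equation turns
`μ_j' ∏_{ℓ ≠ j} (μ_j - μ_ℓ)` into `2 y(μ̂_j) / μ_j`, so `G_{n+1}(μ_j) = -y(μ̂_j)` and hence
`G_{n+1}(μ_j)² = R_{2n+2}(μ_j)`. Since the `μ_j` are distinct, the vanishing of
`R_{2n+2} - G_{n+1}²` at all of them gives divisibility by `F_n`.
-/

open Polynomial Finset Lagrange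

section CommRing

variable {R ι : Type*} [CommRing R] [DecidableEq ι] {s : Finset ι} {v : ι → R}

theorem eval_sum_C_mul_nodal_erase_at_node (c : ι → R) {j : ι} (hj : j ∈ s) :
    (∑ k ∈ s, C (c k) * nodal (s.erase k) v).eval (v j) =
      c j * (nodal (s.erase j) v).eval (v j) := by
  rw [eval_finsetSum, sum_eq_single_of_mem j hj]
  · rw [eval_mul, eval_C]
  · intro k _ hkj
    rw [eval_mul, eval_nodal_at_node (mem_erase.mpr ⟨hkj.symm, hj⟩), mul_zero]

end CommRing

section Field

variable {K ι : Type*} [Field K] {s : Finset ι} {v : ι → K}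

theorem eval_nodal_erase_at_node_ne_zero [DecidableEq ι] (hv : Set.InjOn v s) {j : ι}
    (hj : j ∈ s) : (nodal (s.erase j) v).eval (v j) ≠ 0 :=
  eval_nodal_not_at_node fun _ hℓ hjℓ =>
    (ne_of_mem_erase hℓ) (hv (mem_of_mem_erase hℓ) hj hjℓ.symm)

theorem nodal_dvd_of_forall_eval_eq_zero (hv : Set.InjOn v s) {p : K[X]}
    (hp : ∀ i ∈ s, p.eval (v i) = 0) : nodal s v ∣ p :=
  prod_dvd_of_coprime
    (fun _ hi _ hk hik =>
      isCoprime_X_sub_C_of_isUnit_sub (sub_ne_zero.mpr fun h => hik (hv hi hk h)).isUnit)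
    (fun i hi => dvd_iff_isRoot.mpr (hp i hi))

theorem eval_dubrovin_at_node [DecidableEq ι] [NeZero (2 : K)] (α y : K) (c : ι → K) {j : ι}
    (hj : j ∈ s) (hvj : v j ≠ 0) (hc : c j * (nodal (s.erase j) v).eval (v j) = 2 * y / v j) :
    ((C α + X) * nodal s v - C (1 / 2) * X * ∑ k ∈ s, C (c k) * nodal (s.erase k) v).eval (v j)
      = -y := by
  rw [eval_sub, eval_mul, eval_nodal_at_node hj, eval_mul, eval_sum_C_mul_nodal_erase_at_node c hj,
    hc]
  simp only [eval_mul, eval_C, eval_X]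
  field_simp
  ring

end Field

open Polynomial in
theorem stmt7_general (n : ℕ)
    (I : Set ℝ) (μ μ' : Fin n → ℝ → ℂ) (α : ℝ → ℂ)
    (y : Fin n → ℝ → ℂ)
    (R : Polynomial ℂ)
    (hdist : ∀ x ∈ I, ∀ j k, j ≠ k → μ j x ≠ μ k x)
    (hne : ∀ x ∈ I, ∀ j, μ j x ≠ 0)
    (hy : ∀ j, ∀ x ∈ I, (y j x)^2 = R.eval (μ j x))
    (dub : ∀ j, ∀ x ∈ I, μ' j x = 2 * y j x / μ j x *
      (∏ ℓ ∈ Finset.univ.erase j, (μ j x - μ ℓ x))⁻¹)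
    (F Gp : ℝ → Polynomial ℂ)
    (hF : ∀ x, F x = ∏ j, (X - C (μ j x)))
    (hG : ∀ x, Gp x = (C (α x) + X) * F x
      - C (1/2 : ℂ) * X * ∑ j, C (μ' j x) * ∏ ℓ ∈ Finset.univ.erase j, (X - C (μ ℓ x))) :
    (∀ j, ∀ x ∈ I, R.eval (μ j x) - ((Gp x).eval (μ j x))^2 = 0) ∧
    (∀ x ∈ I, F x ∣ (R - (Gp x)^2)) := by
  have hinj : ∀ x ∈ I, Set.InjOn (μ · x) (univ : Finset (Fin n)) :=
    fun x hx j _ k _ hjk => by_contra fun h => hdist x hx j k h hjk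
  have hGeval : ∀ j, ∀ x ∈ I, (Gp x).eval (μ j x) = -y j x := by
    intro j x hx
    have hP : ∏ ℓ ∈ univ.erase j, (μ j x - μ ℓ x) ≠ 0 := by
      simpa only [eval_nodal] using eval_nodal_erase_at_node_ne_zero (hinj x hx) (mem_univ j)
    rw [hG, hF, ← nodal_eq]
    refine eval_dubrovin_at_node (v := (μ · x)) (α x) (y j x) (μ' · x) (mem_univ j) (hne x hx j) ?_
    rw [eval_nodal]
    exact (eq_mul_inv_iff_mul_eq₀ hP).mp (dub j x hx)
  have hroot : ∀ j, ∀ x ∈ I, R.eval (μ j x) - ((Gp x).eval (μ j x))^2 = 0 := by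
    intro j x hx
    rw [hGeval j x hx, neg_sq, hy j x hx, sub_self]
  refine ⟨hroot, fun x hx => ?_⟩
  rw [hF, ← nodal_eq]
  exact nodal_dvd_of_forall_eval_eq_zero (hinj x hx) fun j _ => by
    rw [eval_sub, eval_pow]
    exact hroot j x hx

open Polynomial in
theorem stmt7 (n : ℕ) (E : Fin (2*n+2) → ℂ) (hE : Function.Injective E)
    (I : Set ℝ) (μ μ' : Fin n → ℝ → ℂ) (α : ℝ → ℂ)
    (y : Fin n → ℝ → ℂ)
    (R : Polynomial ℂ) (hR : R = ∏ m, (X - C (E m)))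
    (hμdiff : ∀ j, ∀ x ∈ I, HasDerivAt (μ j) (μ' j x) x)
    (hdist : ∀ x ∈ I, ∀ j k, j ≠ k → μ j x ≠ μ k x)
    (hne : ∀ x ∈ I, ∀ j, μ j x ≠ 0)
    (hy : ∀ j, ∀ x ∈ I, (y j x)^2 = R.eval (μ j x))
    (dub : ∀ j, ∀ x ∈ I, μ' j x = 2 * y j x / μ j x *
      (∏ ℓ ∈ Finset.univ.erase j, (μ j x - μ ℓ x))⁻¹)
    (F Gp : ℝ → Polynomial ℂ)
    (hF : ∀ x, F x = ∏ j, (X - C (μ j x)))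
    (hG : ∀ x, Gp x = (C (α x) + X) * F x
      - C (1/2 : ℂ) * X * ∑ j, C (μ' j x) * ∏ ℓ ∈ Finset.univ.erase j, (X - C (μ ℓ x))) :
    (∀ j, ∀ x ∈ I, R.eval (μ j x) - ((Gp x).eval (μ j x))^2 = 0) ∧
    (∀ x ∈ I, F x ∣ (R - (Gp x)^2)) :=
  stmt7_general n I μ μ' α y R hdist hne hy dub F Gp hF hG
end

section
/- Under Hypothesis on real branch points E_0 < E_1 < ... < E_{2n+1} and the sign convention for R_{2n+2}(λ)^{1/2} on ℝ, the function z ↦ P_n(z)/R_{2n+2}(z)^{1/2}, where P_n(z) = ∏_{j=1}^n(z - a_j) with a_j ∈ [E_{2j-1}, E_{2j}], maps the open upper half-plane into the closed upper half-plane, i.e., it is a Nevanlinna–Herglotz function. -/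
/-!
On the connected domain `{Im w > 0} ∪ {Re w > E_{2n+1}}` the branch `r` must coincide with
`-∏ m, (w - E_m)^{1/2}` (principal square roots): both are continuous nonvanishing square roots
of `R_{2n+2}`, so their ratio is a continuous function with values in `{1, -1}`, and the sign
convention on `(E_{2n+1}, ∞)` makes it `1`.
For `Im z > 0` the angles `ψ_m = arg (z - E_m)` increase with `m`, and `φ_j = arg (z - a_j)` lies
in `[ψ_{2j-1}, ψ_{2j}]`. Interlacing gives `2 ∑ φ_j ≤ ∑ ψ_m ≤ 2 ∑ φ_j + 2 ψ_{2n+1}`, so the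
argument `∑ φ_j - ∑ ψ_m / 2 + π` of `P_n(z) / r(z)` lies in `[0, π]`.
-/

open Complex Finset
open scoped Real

theorem Complex.arg_le_arg_of_im_eq {w₁ w₂ : ℂ} (him : w₁.im = w₂.im) (hpos : 0 < w₁.im)
    (hre : w₂.re ≤ w₁.re) : arg w₁ ≤ arg w₂ := by
  have hw₁ : w₁ ≠ 0 := fun h => by simp [h] at hpos
  have hw₂ : w₂ ≠ 0 := fun h => by rw [h, zero_im] at him; linarith
  have hs₁ := norm_pos_iff.2 hw₁
  have hs₂ := norm_pos_iff.2 hw₂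
  rw [← Real.strictAntiOn_cos.le_iff_ge ⟨arg_nonneg_iff.2 (him ▸ hpos.le), arg_le_pi _⟩
    ⟨arg_nonneg_iff.2 hpos.le, arg_le_pi _⟩, cos_arg hw₁, cos_arg hw₂,
    div_le_div_iff₀ hs₂ hs₁]
  have hsq₁ : ‖w₁‖ ^ 2 = w₁.re ^ 2 + w₁.im ^ 2 := by rw [← normSq_eq_norm_sq, normSq_apply]; ring
  have hsq₂ : ‖w₂‖ ^ 2 = w₂.re ^ 2 + w₁.im ^ 2 := by
    rw [← normSq_eq_norm_sq, normSq_apply, him]; ring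
  have hcross : w₁.re * w₂.re ≤ ‖w₁‖ * ‖w₂‖ := by
    calc w₁.re * w₂.re ≤ |w₁.re * w₂.re| := le_abs_self _
      _ = |w₁.re| * |w₂.re| := abs_mul _ _
      _ ≤ ‖w₁‖ * ‖w₂‖ := mul_le_mul (abs_re_le_norm _) (abs_re_le_norm _) (abs_nonneg _)
          hs₁.le
  -- `re w / ‖w‖` increases with `re w` at fixed `im w`: after clearing denominators the difference
  -- factors through `w₁.re - w₂.re`, with a cofactor that is nonnegative since `|re w| ≤ ‖w‖`.
  have hfactor : (w₁.re * ‖w₂‖ - w₂.re * ‖w₁‖) * (‖w₁‖ + ‖w₂‖)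
      = (w₁.re - w₂.re) * (‖w₁‖ * ‖w₂‖ - w₁.re * w₂.re + w₁.im ^ 2) := by
    linear_combination w₁.re * hsq₂ - w₂.re * hsq₁
  have hnonneg : 0 ≤ (w₁.re * ‖w₂‖ - w₂.re * ‖w₁‖) * (‖w₁‖ + ‖w₂‖) :=
    hfactor ▸ mul_nonneg (sub_nonneg.2 hre) (by linarith [sq_nonneg w₁.im])
  linarith [nonneg_of_mul_nonneg_left hnonneg (by positivity)]

theorem Complex.prod_ofReal_mul_exp_mul_I {ι : Type*} (s : Finset ι) (ρ θ : ι → ℝ) :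
    ∏ i ∈ s, (ρ i : ℂ) * exp (θ i * I) =
      ((∏ i ∈ s, ρ i : ℝ) : ℂ) * exp ((∑ i ∈ s, θ i : ℝ) * I) := by
  rw [prod_mul_distrib, ofReal_prod, ofReal_sum, sum_mul, exp_sum]

theorem Complex.cpow_one_half (w : ℂ) :
    w ^ (1 / 2 : ℂ) = ((‖w‖ ^ (1 / 2 : ℝ) : ℝ) : ℂ) * exp ((arg w / 2 : ℝ) * I) := by
  rw [show (1 / 2 : ℂ) = ((1 / 2 : ℝ) : ℂ) by push_cast; rfl, cpow_ofReal, exp_mul_I]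
  push_cast
  ring_nf

theorem Complex.im_ofReal_mul_exp_div_neg_nonneg {ρ₁ ρ₂ α β : ℝ} (hρ₁ : 0 ≤ ρ₁) (hρ₂ : 0 ≤ ρ₂)
    (hαβ : α ≤ β) (hβα : β ≤ α + π) :
    0 ≤ ((ρ₁ : ℂ) * exp (α * I) / -((ρ₂ : ℂ) * exp (β * I))).im := by
  have hpolar : (ρ₁ : ℂ) * exp (α * I) / -((ρ₂ : ℂ) * exp (β * I))
      = ((ρ₁ / ρ₂ : ℝ) : ℂ) * exp ((α - β + π : ℝ) * I) := by
    rw [show ((α - β + π : ℝ) : ℂ) * I = α * I - β * I + π * I by push_cast; ring, exp_add,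
      exp_sub, exp_pi_mul_I, ofReal_div]
    ring
  rw [hpolar, im_ofReal_mul, exp_ofReal_mul_I_im]
  exact mul_nonneg (div_nonneg hρ₁ hρ₂)
    (Real.sin_nonneg_of_nonneg_of_le_pi (by linarith) (by linarith))

theorem two_mul_sum_Icc_add_le_sum_range {n : ℕ} {ψ φ : ℕ → ℝ}
    (hψ : ∀ m, m + 1 ≤ 2 * n + 1 → ψ m ≤ ψ (m + 1))
    (hφ : ∀ j, 1 ≤ j → j ≤ n → φ j ≤ ψ (2 * j)) :
    2 * ∑ j ∈ Icc 1 n, φ j + ψ 0 + ψ 1 ≤ ∑ m ∈ range (2 * n + 2), ψ m := by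
  induction n with
  | zero => simp [sum_range_succ]
  | succ n ih =>
    have := ih (fun m hm => hψ m (by omega)) (fun j h₁ h₂ => hφ j h₁ (by omega))
    have := hφ (n + 1) (by omega) le_rfl
    have := hψ (2 * n + 2) (by omega)
    rw [sum_Icc_succ_top (by omega), show 2 * (n + 1) + 2 = 2 * n + 2 + 1 + 1 by ring,
      sum_range_succ, sum_range_succ]
    rw [show 2 * (n + 1) = 2 * n + 2 by ring] at *
    linarith

theorem sum_range_le_two_mul_sum_Icc_add {n : ℕ} {ψ φ : ℕ → ℝ}
    (hψ : ∀ m, m + 1 ≤ 2 * n + 1 → ψ m ≤ ψ (m + 1))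
    (hφ : ∀ j, 1 ≤ j → j ≤ n → ψ (2 * j - 1) ≤ φ j) :
    ∑ m ∈ range (2 * n + 2), ψ m ≤ 2 * ∑ j ∈ Icc 1 n, φ j + 2 * ψ (2 * n + 1) := by
  induction n with
  | zero => simpa [sum_range_succ, two_mul] using hψ 0 le_rfl
  | succ n ih =>
    have := ih (fun m hm => hψ m (by omega)) (fun j h₁ h₂ => hφ j h₁ (by omega))
    have := hφ (n + 1) (by omega) le_rfl
    have := hψ (2 * n + 2) (by omega)
    rw [sum_Icc_succ_top (by omega), show 2 * (n + 1) + 2 = 2 * n + 2 + 1 + 1 by ring,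
      sum_range_succ, sum_range_succ]
    rw [show 2 * (n + 1) - 1 = 2 * n + 1 by omega,
      show 2 * (n + 1) + 1 = 2 * n + 2 + 1 by ring] at *
    linarith

theorem im_prod_sub_div_neg_prod_sub_cpow_one_half_nonneg {n : ℕ} {E a : ℕ → ℝ}
    (hE : ∀ m, m + 1 ≤ 2 * n + 1 → E m ≤ E (m + 1))
    (ha : ∀ j, 1 ≤ j → j ≤ n → a j ∈ Set.Icc (E (2 * j - 1)) (E (2 * j))) {z : ℂ}
    (hz : 0 < z.im) :
    0 ≤ ((∏ j ∈ Icc 1 n, (z - a j)) / -∏ m ∈ range (2 * n + 2), (z - E m) ^ (1 / 2 : ℂ)).im := by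
  have harg : ∀ {c c' : ℝ}, c ≤ c' → arg (z - c) ≤ arg (z - c') := fun h =>
    arg_le_arg_of_im_eq (by simp) (by simpa using hz)
      (by simp only [sub_re, ofReal_re]; linarith)
  have hψ : ∀ m, m + 1 ≤ 2 * n + 1 → arg (z - E m) ≤ arg (z - E (m + 1)) := fun m hm =>
    harg (hE m hm)
  have hupper := two_mul_sum_Icc_add_le_sum_range hψ fun j h₁ h₂ => harg (ha j h₁ h₂).2
  have hlower := sum_range_le_two_mul_sum_Icc_add hψ fun j h₁ h₂ => harg (ha j h₁ h₂).1
  have hψ₀ : 0 ≤ arg (z - E 0) + arg (z - E 1) :=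
    add_nonneg (arg_nonneg_iff.2 (by simpa using hz.le)) (arg_nonneg_iff.2 (by simpa using hz.le))
  have hψπ := arg_le_pi (z - E (2 * n + 1))
  rw [← prod_congr rfl fun j _ => norm_mul_exp_arg_mul_I (z - a j),
    prod_congr rfl fun m _ => cpow_one_half (z - E m), prod_ofReal_mul_exp_mul_I,
    prod_ofReal_mul_exp_mul_I]
  refine im_ofReal_mul_exp_div_neg_nonneg (prod_nonneg fun _ _ => norm_nonneg _)
    (prod_nonneg fun _ _ => by positivity) ?_ ?_ <;> rw [← sum_div] <;> linarith

theorem continuousOn_prod_sub_cpow_one_half {ι : Type*} (s : Finset ι) (e : ι → ℝ) :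
    ContinuousOn (fun w : ℂ => ∏ i ∈ s, (w - e i) ^ (1 / 2 : ℂ))
      {w | ∀ i ∈ s, w - e i ∈ slitPlane} :=
  continuousOn_finsetProd s fun i hi _ hw =>
    ((continuous_id.sub continuous_const).continuousAt.cpow continuousAt_const
      (hw i hi)).continuousWithinAt

theorem prod_sub_cpow_one_half_ne_zero {ι : Type*} {s : Finset ι} {e : ι → ℝ} {w : ℂ}
    (hw : ∀ i ∈ s, w - e i ≠ 0) : ∏ i ∈ s, (w - e i) ^ (1 / 2 : ℂ) ≠ 0 :=
  prod_ne_zero_iff.2 fun i hi => by simp [cpow_eq_zero_iff, hw i hi]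

theorem prod_cpow_one_half_sq {ι : Type*} (s : Finset ι) (f : ι → ℂ) :
    (∏ i ∈ s, f i ^ (1 / 2 : ℂ)) ^ 2 = ∏ i ∈ s, f i := by
  rw [← prod_pow]
  exact prod_congr rfl fun i _ => by simp

theorem re_prod_sub_cpow_one_half_pos {ι : Type*} {s : Finset ι} {e : ι → ℝ} {x : ℝ}
    (hx : ∀ i ∈ s, e i < x) : 0 < (∏ i ∈ s, ((x : ℂ) - e i) ^ (1 / 2 : ℂ)).re := by
  have h : ∀ i ∈ s, ((x : ℂ) - e i) ^ (1 / 2 : ℂ) = ((x - e i) ^ (1 / 2 : ℝ) : ℝ) := fun i hi => by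
    rw [ofReal_cpow (sub_pos.2 (hx i hi)).le]
    push_cast
    rfl
  rw [prod_congr rfl h, ← ofReal_prod, ofReal_re]
  exact prod_pos fun i hi => Real.rpow_pos_of_pos (sub_pos.2 (hx i hi)) _

theorem Complex.eq_of_sq_eq_sq_of_re_neg {a b : ℂ} (h : a ^ 2 = b ^ 2) (ha : a.re < 0)
    (hb : b.re < 0) : a = b := by
  rcases sq_eq_sq_iff_eq_or_eq_neg.1 h with h | h
  · exact h
  · rw [h, neg_re] at ha; linarith

theorem eqOn_of_sq_eq_sq_of_isPreconnected {α 𝕜 : Type*} [TopologicalSpace α] [Field 𝕜]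
    [TopologicalSpace 𝕜] [IsTopologicalDivisionRing 𝕜] [T1Space 𝕜] {s : Set α} {f g : α → 𝕜}
    (hs : IsPreconnected s) (hf : ContinuousOn f s) (hg : ContinuousOn g s)
    (hg₀ : ∀ x ∈ s, g x ≠ 0) (hsq : ∀ x ∈ s, f x ^ 2 = g x ^ 2) {x₀ : α} (hx₀ : x₀ ∈ s)
    (h : f x₀ = g x₀) : Set.EqOn f g s := by
  have hmaps : Set.MapsTo (f / g) s {1, -1} := fun x hx => by
    rcases sq_eq_sq_iff_eq_or_eq_neg.1 (hsq x hx) with h | h <;> simp [h, hg₀ x hx]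
  intro x hx
  have := hs.constant_of_mapsTo (Set.toFinite _).isDiscrete (hf.div hg hg₀) hmaps hx hx₀
  simpa [h, hg₀ x hx, hg₀ x₀ hx₀, div_eq_one_iff_eq] using this

theorem isPreconnected_im_pos_union_re_gt (c : ℝ) :
    IsPreconnected ({w : ℂ | 0 < w.im} ∪ {w | c < w.re}) :=
  (convex_halfSpace_im_gt 0).isPreconnected.union (c + 1 + I) (by simp) (by simp)
    (convex_halfSpace_re_gt c).isPreconnected

theorem stmt13 (n : ℕ) (E : ℕ → ℝ)
    (hE : ∀ m, m + 1 ≤ 2*n+1 → E m < E (m+1))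
    (S : Set ℂ)
    (hS : S = {z : ℂ | z.im = 0 ∧ ∃ ℓ ≤ n, z.re ∈ Set.Icc (E (2*ℓ)) (E (2*ℓ+1))})
    (r : ℂ → ℂ)
    (hr_an : DifferentiableOn ℂ r Sᶜ)
    (hr_sq : ∀ z ∉ S, (r z)^2 = ∏ m ∈ Finset.range (2*n+2), (z - (E m : ℂ)))
    (hr_sign : ∀ lam : ℝ, E (2*n+1) < lam → (r lam).im = 0 ∧ (r lam).re < 0)
    (a : ℕ → ℝ) (ha : ∀ j, 1 ≤ j → j ≤ n → a j ∈ Set.Icc (E (2*j-1)) (E (2*j))) :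
    ∀ z : ℂ, 0 < z.im →
      0 ≤ ((∏ j ∈ Finset.Icc 1 n, (z - (a j : ℂ))) / r z).im := by
  intro z hz
  set c := E (2 * n + 1)
  set W : Set ℂ := {w | 0 < w.im} ∪ {w | c < w.re}
  have hEc : ∀ m ∈ range (2 * n + 2), E m ≤ c := fun m hm =>
    have hm' : m ≤ 2 * n + 1 := Nat.lt_succ_iff.1 (mem_range.1 hm)
    (strictMonoOn_Iic_of_lt_succ fun k hk => by simpa using hE k hk).monotoneOn hm' le_rfl hm'
  have hslit : W ⊆ {w | ∀ m ∈ range (2 * n + 2), w - E m ∈ slitPlane} := by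
    rintro w (hw | hw) m hm
    · exact Or.inr (by simpa using hw.ne')
    · exact Or.inl (by simpa using (hEc m hm).trans_lt hw)
  have hWS : W ⊆ Sᶜ := by
    subst hS
    rintro w (hw | hw) ⟨him, ℓ, hℓ, -, hre⟩
    · exact hw.ne' him
    · exact (hre.trans (hEc _ (mem_range.2 (by omega)))).not_gt hw
  set g : ℂ → ℂ := fun w => -∏ m ∈ range (2 * n + 2), (w - E m) ^ (1 / 2 : ℂ)
  have hsq : ∀ w ∈ W, r w ^ 2 = g w ^ 2 := fun w hw => by
    rw [neg_sq, prod_cpow_one_half_sq, hr_sq w (hWS hw)]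
  have hx₀ : ((c + 1 : ℝ) : ℂ) ∈ W := Or.inr (by simp)
  have hrg : Set.EqOn r g W :=
    eqOn_of_sq_eq_sq_of_isPreconnected (isPreconnected_im_pos_union_re_gt c)
      (hr_an.continuousOn.mono hWS) ((continuousOn_prod_sub_cpow_one_half _ _).neg.mono hslit)
      (fun w hw => neg_ne_zero.2 (prod_sub_cpow_one_half_ne_zero fun m hm =>
        slitPlane_ne_zero (hslit hw m hm))) hsq hx₀
      (eq_of_sq_eq_sq_of_re_neg (hsq _ hx₀) (hr_sign _ (lt_add_one c)).2
        (neg_neg_of_pos (re_prod_sub_cpow_one_half_pos fun m hm => by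
          linarith [hEc m hm])))
  rw [hrg (Or.inl hz)]
  exact im_prod_sub_div_neg_prod_sub_cpow_one_half_nonneg (fun m hm => (hE m hm).le) ha hz
end

section
/- There is no monic polynomial P of degree n+2 such that P(z)/R_{2n+2}(z)^{1/2} is a Nevanlinna–Herglotz function, where R_{2n+2}(z) = ∏_{m=0}^{2n+1}(z - E_m) with E_0 < ... < E_{2n+1} real and the square root branch is chosen so that R_{2n+2}(λ)^{1/2} ~ -λ^{n+1} as λ → +∞ along the real axis. -/
/-! For large `R`, on the circle `‖z‖ = R` we have `P z ≈ z ^ (n + 2)` and `r z ^ 2 ≈ z ^ (2n + 2)`,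
so `r z / z ^ (n + 1)` is close to `1` or to `-1`. Along the quarter arc from `R` to `R * I`, which
misses the cuts, its real part never vanishes, so it cannot switch between the two; at `R` it is
close to `-1` by the choice of branch, hence also at `R * I`. There `P z / r z ≈ -z = -R * I` has
negative imaginary part, contradicting the Herglotz property. -/

open Polynomial Filter Topology Bornology Set Complex Real

theorem Polynomial.Monic.tendsto_eval_div_pow_natDegree {𝕜 : Type*} [NormedField 𝕜] {p : 𝕜[X]}
    (hp : p.Monic) : Tendsto (fun z ↦ p.eval z / z ^ p.natDegree) (cobounded 𝕜) (𝓝 1) := by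
  have hz : ∀ᶠ z in cobounded 𝕜, z ^ p.natDegree ≠ 0 :=
    (eventually_ne_cobounded 0).mono fun z hz ↦ pow_ne_zero _ hz
  have h := isEquivalent_cobounded_leading_monomial (P := p)
  simp only [hp.leadingCoeff, one_mul] at h
  exact (Asymptotics.isEquivalent_iff_tendsto_one hz).mp h

theorem Polynomial.Monic.eventually_norm_eval_div_pow_sub_one_lt {𝕜 : Type*} [NormedField 𝕜]
    {p : 𝕜[X]} (hp : p.Monic) {ε : ℝ} (hε : 0 < ε) :
    ∀ᶠ R in atTop, ∀ z : 𝕜, ‖z‖ = R → ‖p.eval z / z ^ p.natDegree - 1‖ < ε := by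
  have := hp.tendsto_eval_div_pow_natDegree.eventually (Metric.ball_mem_nhds 1 hε)
  rw [← comap_norm_atTop, eventually_comap] at this
  simpa only [Metric.mem_ball, dist_eq_norm] using this

namespace Complex

theorem re_ne_zero_of_norm_sq_sub_one_lt_one {u : ℂ} (h : ‖u ^ 2 - 1‖ < 1) : u.re ≠ 0 := by
  intro h0
  have hre : (u ^ 2 - 1).re = -u.im ^ 2 - 1 := by simp [sq, h0]
  have := abs_re_le_norm (u ^ 2 - 1)
  rw [hre, abs_of_neg (by nlinarith)] at this
  nlinarith

theorem norm_add_one_le_norm_sq_sub_one {u : ℂ} (hu : u.re ≤ 0) : ‖u + 1‖ ≤ ‖u ^ 2 - 1‖ := by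
  have h1 : 1 ≤ ‖u - 1‖ := by
    have := neg_le_abs (u - 1).re |>.trans (abs_re_le_norm (u - 1))
    simp only [sub_re, one_re] at this
    linarith
  calc ‖u + 1‖ ≤ ‖u + 1‖ * ‖u - 1‖ := le_mul_of_one_le_right (norm_nonneg _) h1
    _ = ‖u ^ 2 - 1‖ := by rw [← norm_mul]; ring_nf

theorem re_div_neg_of_norm_sub_one_lt {u v : ℂ} (hv : ‖v - 1‖ < 1 / 4) (hu : ‖u + 1‖ < 1 / 4) :
    (v / u).re < 0 := by
  have hu0 : 3 / 4 < ‖u‖ := by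
    have := norm_sub_norm_le (1 : ℂ) (-u)
    rw [norm_one, norm_neg, sub_neg_eq_add, add_comm] at this
    linarith
  have hnum : ‖v + u‖ < 1 / 2 := by
    calc ‖v + u‖ = ‖(v - 1) + (u + 1)‖ := by ring_nf
      _ ≤ ‖v - 1‖ + ‖u + 1‖ := norm_add_le _ _
      _ < 1 / 2 := by linarith
  have hclose : ‖v / u + 1‖ < 1 := by
    rw [div_add_one (norm_pos_iff.mp (by linarith)), norm_div, div_lt_one (by linarith)]
    linarith
  have := (abs_re_le_norm (v / u + 1)).trans_lt hclose
  rw [add_re, one_re, abs_lt] at this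
  linarith

end Complex

theorem IsPreconnected.re_neg_of_norm_sq_sub_one_lt_one {α : Type*} [TopologicalSpace α]
    {s : Set α} (hs : IsPreconnected s) {u : α → ℂ} (hu : ContinuousOn u s)
    (hsq : ∀ z ∈ s, ‖u z ^ 2 - 1‖ < 1) {a b : α} (ha : a ∈ s) (hb : b ∈ s)
    (hua : (u a).re < 0) : (u b).re < 0 := by
  by_contra! hub
  obtain ⟨c, hc, hc0⟩ := hs.intermediate_value ha hb (continuous_re.comp_continuousOn hu)
    ⟨hua.le, hub⟩
  exact re_ne_zero_of_norm_sq_sub_one_lt_one (hsq c hc) hc0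

def quarterArc (R : ℝ) : Set ℂ := circleMap 0 R '' Icc 0 (π / 2)

theorem isPreconnected_quarterArc (R : ℝ) : IsPreconnected (quarterArc R) :=
  isPreconnected_Icc.image _ (continuous_circleMap 0 R).continuousOn

theorem norm_of_mem_quarterArc {R : ℝ} (hR : 0 ≤ R) {z : ℂ} (hz : z ∈ quarterArc R) :
    ‖z‖ = R := by
  obtain ⟨θ, -, rfl⟩ := hz
  rw [norm_circleMap_zero, abs_of_nonneg hR]

theorem ofReal_mem_quarterArc (R : ℝ) : (R : ℂ) ∈ quarterArc R :=
  ⟨0, ⟨le_rfl, by positivity⟩, by simp [circleMap]⟩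

theorem ofReal_mul_I_mem_quarterArc (R : ℝ) : (R * I : ℂ) ∈ quarterArc R :=
  ⟨π / 2, ⟨by positivity, le_rfl⟩, by simp [circleMap_pi_div_two]⟩

theorem re_eq_of_mem_quarterArc_of_im_eq_zero {R : ℝ} {z : ℂ} (hz : z ∈ quarterArc R)
    (h : z.im = 0) : z.re = R := by
  obtain ⟨θ, hθ, rfl⟩ := hz
  simp only [circleMap_zero, re_ofReal_mul, im_ofReal_mul, exp_ofReal_mul_I_re,
    exp_ofReal_mul_I_im] at h ⊢
  have hcos : 0 ≤ Real.cos θ := Real.cos_nonneg_of_mem_Icc ⟨by linarith [hθ.1, pi_pos], hθ.2⟩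
  rcases mul_eq_zero.mp h with rfl | hsin
  · simp
  · have := Real.sin_sq_add_cos_sq θ
    rw [hsin] at this
    have : Real.cos θ = 1 := by nlinarith
    rw [this, mul_one]

theorem re_div_pow_at_mul_I_neg {R : ℝ} (hR : 0 < R) {f : ℂ → ℂ} {k : ℕ}
    (hf : ContinuousOn f (quarterArc R))
    (hsq : ∀ z ∈ quarterArc R, ‖(f z / z ^ k) ^ 2 - 1‖ < 1) (h0 : (f R).re < 0) :
    (f (R * I) / (R * I) ^ k).re < 0 := by
  have hz0 : ∀ z ∈ quarterArc R, z ^ k ≠ 0 := fun z hz ↦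
    pow_ne_zero _ (norm_pos_iff.mp (norm_of_mem_quarterArc hR.le hz ▸ hR))
  refine (isPreconnected_quarterArc R).re_neg_of_norm_sq_sub_one_lt_one
    (hf.div (continuous_pow k).continuousOn hz0) hsq (ofReal_mem_quarterArc R)
    (ofReal_mul_I_mem_quarterArc R) ?_
  change (f R / (R : ℂ) ^ k).re < 0
  rw [← ofReal_pow, div_ofReal_re]
  exact div_neg_of_neg_of_pos h0 (by positivity)

theorem im_div_neg_of_div_pow_approx {R : ℝ} (hR : 0 < R) {p q : ℂ} {k : ℕ}
    (hp : ‖p / (R * I) ^ (k + 1) - 1‖ < 1 / 4) (hq : ‖q / (R * I) ^ k + 1‖ < 1 / 4) :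
    (p / q).im < 0 := by
  have hw : (R * I : ℂ) ≠ 0 := by simp [hR.ne']
  have hq0 : q ≠ 0 := by
    rintro rfl
    norm_num at hq
  have hsplit : p / q = R * (I * ((p / (R * I) ^ (k + 1)) / (q / (R * I) ^ k))) := by
    field_simp
    ring
  rw [hsplit, im_ofReal_mul, I_mul_im]
  exact mul_neg_of_pos_of_neg hR (re_div_neg_of_norm_sub_one_lt hp hq)

theorem stmt14_general (n : ℕ) (E : ℕ → ℝ)
    (S : Set ℂ)
    (hS : S = {z : ℂ | z.im = 0 ∧ ∃ ℓ ≤ n, z.re ∈ Set.Icc (E (2*ℓ)) (E (2*ℓ+1))})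
    (r : ℂ → ℂ)
    (hr_an : DifferentiableOn ℂ r Sᶜ)
    (hr_sq : ∀ z ∉ S, (r z)^2 = ∏ m ∈ Finset.range (2*n+2), (z - (E m : ℂ)))
    (hr_sign : ∀ lam : ℝ, E (2*n+1) < lam → (r lam).im = 0 ∧ (r lam).re < 0) :
    ¬ ∃ P : Polynomial ℂ, P.Monic ∧ P.natDegree = n + 2 ∧
      ∀ z : ℂ, 0 < z.im → 0 ≤ (P.eval z / r z).im := by
  rintro ⟨P, hPm, hPdeg, hherg⟩
  set Q : ℂ[X] := ∏ m ∈ Finset.range (2 * n + 2), (X - C (E m : ℂ))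
  have hQdeg : Q.natDegree = 2 * n + 2 := by simp [Q]
  obtain ⟨R, hR0, hRE, hP, hQ⟩ : ∃ R : ℝ, 0 < R ∧ (∀ m ∈ Finset.range (2 * n + 2), E m < R) ∧
      (∀ z : ℂ, ‖z‖ = R → ‖P.eval z / z ^ (n + 2) - 1‖ < 1 / 4) ∧
      ∀ z : ℂ, ‖z‖ = R → ‖Q.eval z / z ^ (2 * n + 2) - 1‖ < 1 / 4 := by
    have hP := hPm.eventually_norm_eval_div_pow_sub_one_lt (ε := 1 / 4) (by norm_num)
    have hQ := (monic_prod_X_sub_C _ _).eventually_norm_eval_div_pow_sub_one_lt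
      (p := Q) (ε := 1 / 4) (by norm_num)
    rw [hPdeg] at hP
    rw [hQdeg] at hQ
    exact ((eventually_gt_atTop 0).and <| ((Finset.eventually_all _).2 fun m _ ↦
      eventually_gt_atTop (E m)).and <| hP.and hQ).exists
  have hA_S : quarterArc R ⊆ Sᶜ := by
    rw [hS]
    rintro z hz ⟨him, ℓ, hℓ, hre⟩
    linarith [re_eq_of_mem_quarterArc_of_im_eq_zero hz him, hre.2,
      hRE (2 * ℓ + 1) (by simp; omega)]
  have hr_div_sq : ∀ z ∈ quarterArc R, ‖(r z / z ^ (n + 1)) ^ 2 - 1‖ < 1 / 4 := by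
    intro z hz
    convert hQ z (norm_of_mem_quarterArc hR0.le hz) using 3
    simp only [Q, div_pow, hr_sq z (hA_S hz), eval_prod, eval_sub, eval_X, eval_C]
    ring
  have hre_RI := re_div_pow_at_mul_I_neg hR0 (hr_an.continuousOn.mono hA_S)
    (fun z hz ↦ (hr_div_sq z hz).trans (by norm_num)) (hr_sign R (hRE (2 * n + 1) (by simp))).2
  have hr_RI_near := (norm_add_one_le_norm_sq_sub_one hre_RI.le).trans_lt
    (hr_div_sq _ (ofReal_mul_I_mem_quarterArc R))
  exact (hherg (R * I) (by simpa using hR0)).not_gt <| im_div_neg_of_div_pow_approx hR0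
    (hP _ (norm_of_mem_quarterArc hR0.le (ofReal_mul_I_mem_quarterArc R))) hr_RI_near

theorem stmt14 (n : ℕ) (E : ℕ → ℝ)
    (hE : ∀ m, m + 1 ≤ 2*n+1 → E m < E (m+1))
    (S : Set ℂ)
    (hS : S = {z : ℂ | z.im = 0 ∧ ∃ ℓ ≤ n, z.re ∈ Set.Icc (E (2*ℓ)) (E (2*ℓ+1))})
    (r : ℂ → ℂ)
    (hr_an : DifferentiableOn ℂ r Sᶜ)
    (hr_sq : ∀ z ∉ S, (r z)^2 = ∏ m ∈ Finset.range (2*n+2), (z - (E m : ℂ)))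
    (hr_sign : ∀ lam : ℝ, E (2*n+1) < lam → (r lam).im = 0 ∧ (r lam).re < 0) :
    ¬ ∃ P : Polynomial ℂ, P.Monic ∧ P.natDegree = n + 2 ∧
      ∀ z : ℂ, 0 < z.im → 0 ≤ (P.eval z / r z).im :=
  stmt14_general n E S hS r hr_an hr_sq hr_sign
end

section
/- The 2×2 first-order system ψ₁' = -ψ₁ - z̃αψ₁ + z̃ψ₂, ψ₂' = ψ₂ + z̃αψ₂ - z̃(α² + w)ψ₁ implies, upon eliminating ψ₂, the scalar equation -ψ₁'' + ψ₁ = z̃² w ψ₁ - z̃(4u - u'')ψ₁, where α = u' + 2u. -/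
/-! Differentiating `ψ₁' = -ψ₁ - z α ψ₁ + z ψ₂` and using both equations to eliminate `z ψ₂` and
`z ψ₂'`, every term involving `α` cancels except `z (α' - 2α) ψ₁`; for `α = u' + 2u` this is
`z (u'' - 4u) ψ₁`. -/

section Elimination

variable {𝕜 𝔸 : Type*} [NontriviallyNormedField 𝕜] [NormedCommRing 𝔸] [NormedAlgebra 𝕜 𝔸]
  {z : 𝔸} {α α' w ψ₁ ψ₂ p1 p1' p2 : 𝕜 → 𝔸} {x : 𝕜}

theorem deriv_first_component_eq (hα : HasDerivAt α (α' x) x)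
    (hψ₁ : HasDerivAt ψ₁ (p1 x) x) (hψ₂ : HasDerivAt ψ₂ (p2 x) x) (hp1 : HasDerivAt p1 (p1' x) x)
    (e1 : ∀ y, p1 y = -(ψ₁ y) - z * α y * ψ₁ y + z * ψ₂ y) :
    p1' x = -(p1 x) - z * (α' x * ψ₁ x + α x * p1 x) + z * p2 x := by
  have hp1_eq : p1 = fun y => -(ψ₁ y) - z * (α y * ψ₁ y) + z * ψ₂ y := by
    funext y
    rw [e1 y, mul_assoc]
  rw [hp1_eq] at hp1
  exact hp1.unique ((hψ₁.neg.sub ((hα.mul hψ₁).const_mul z)).add (hψ₂.const_mul z))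

theorem second_order_eq_of_first_order_system (hα : HasDerivAt α (α' x) x)
    (hψ₁ : HasDerivAt ψ₁ (p1 x) x) (hψ₂ : HasDerivAt ψ₂ (p2 x) x) (hp1 : HasDerivAt p1 (p1' x) x)
    (e1 : ∀ y, p1 y = -(ψ₁ y) - z * α y * ψ₁ y + z * ψ₂ y)
    (e2 : p2 x = ψ₂ x + z * α x * ψ₂ x - z * ((α x) ^ 2 + w x) * ψ₁ x) :
    -(p1' x) + ψ₁ x = z ^ 2 * w x * ψ₁ x + z * (α' x - 2 * α x) * ψ₁ x := by
  linear_combination -deriv_first_component_eq hα hψ₁ hψ₂ hp1 e1 +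
    (1 + z * α x) * e1 x - z * e2

end Elimination

theorem stmt15_general (z : ℂ) (u u1 u2 w ψ₁ ψ₂ p1 p1' p2 : ℝ → ℂ)
    (hu : ∀ x, HasDerivAt u (u1 x) x) (hu1 : ∀ x, HasDerivAt u1 (u2 x) x)
    (hψ₁ : ∀ x, HasDerivAt ψ₁ (p1 x) x) (hp1 : ∀ x, HasDerivAt p1 (p1' x) x)
    (hψ₂ : ∀ x, HasDerivAt ψ₂ (p2 x) x)
    (α : ℝ → ℂ) (hα : ∀ x, α x = u1 x + 2 * u x)
    (e1 : ∀ x, p1 x = -(ψ₁ x) - z * α x * ψ₁ x + z * ψ₂ x)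
    (e2 : ∀ x, p2 x = ψ₂ x + z * α x * ψ₂ x - z * ((α x)^2 + w x) * ψ₁ x) :
    ∀ x, -(p1' x) + ψ₁ x = z^2 * w x * ψ₁ x - z * (4 * u x - u2 x) * ψ₁ x := by
  intro x
  have hα_eq : α = fun y => u1 y + 2 * u y := funext hα
  have hα_deriv : HasDerivAt α (u2 x + 2 * u1 x) x := by
    rw [hα_eq]
    exact (hu1 x).add ((hu x).const_mul 2)
  rw [second_order_eq_of_first_order_system (α' := fun y => u2 y + 2 * u1 y) hα_deriv (hψ₁ x) (hψ₂ x)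
    (hp1 x) e1 (e2 x), hα x]
  ring

theorem stmt15 (z : ℂ) (u u1 u2 w ψ₁ ψ₂ p1 p1' p2 : ℝ → ℂ)
    (hu : ∀ x, HasDerivAt u (u1 x) x) (hu1 : ∀ x, HasDerivAt u1 (u2 x) x)
    (hw : Continuous w)
    (hψ₁ : ∀ x, HasDerivAt ψ₁ (p1 x) x) (hp1 : ∀ x, HasDerivAt p1 (p1' x) x)
    (hψ₂ : ∀ x, HasDerivAt ψ₂ (p2 x) x)
    (α : ℝ → ℂ) (hα : ∀ x, α x = u1 x + 2 * u x)
    (e1 : ∀ x, p1 x = -(ψ₁ x) - z * α x * ψ₁ x + z * ψ₂ x)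
    (e2 : ∀ x, p2 x = ψ₂ x + z * α x * ψ₂ x - z * ((α x)^2 + w x) * ψ₁ x) :
    ∀ x, -(p1' x) + ψ₁ x = z^2 * w x * ψ₁ x - z * (4 * u x - u2 x) * ψ₁ x :=
  stmt15_general z u u1 u2 w ψ₁ ψ₂ p1 p1' p2 hu hu1 hψ₁ hp1 hψ₂ α hα e1 e2
end
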